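/- (Semantic Glivenko) A propositional formula φ is valid in all Boolean algebras if and only if ¬¬φ is valid in all Heyting algebras. -/

import Mathlib

/-- Propositional formulas over the signature `{¬, →, ∧, ∨}` with variables in `ℕ`. -/
inductive PropForm : Type
  | var : ℕ → PropForm
  | neg : PropForm → PropForm
  | imp : PropForm → PropForm → PropForm
  | and : PropForm → PropForm → PropForm
  | or : PropForm → PropForm → PropForm

/-- Evaluation of a propositional formula in a Heyting algebra under a valuation,
interpreting `¬` as pseudocomplement, `→` as `⇨`, `∧` as `⊓` and `∨` as `⊔`. -/
def PropForm.heval {H : Type} [HeytingAlgebra H] (v : ℕ → H) : PropForm → H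
  | .var n => v n
  | .neg φ => (φ.heval v)ᶜ
  | .imp φ ψ => φ.heval v ⇨ ψ.heval v
  | .and φ ψ => φ.heval v ⊓ ψ.heval v
  | .or φ ψ => φ.heval v ⊔ ψ.heval v

theorem heval_regular {H : Type} [HeytingAlgebra H] (v : ℕ → H) (φ : PropForm) :
    ((φ.heval (fun n => Heyting.Regular.toRegular (v n)) : Heyting.Regular H) : H)
      = (φ.heval v)ᶜᶜ := by
  induction φ with
  | var n => simp [PropForm.heval, Heyting.Regular.coe_toRegular]
  | neg φ ih =>
      simp [PropForm.heval, Heyting.Regular.coe_compl, ih, compl_compl_compl]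
  | imp φ ψ ih1 ih2 =>
      simp [PropForm.heval, Heyting.Regular.coe_himp, ih1, ih2,
        compl_compl_himp_distrib]
  | and φ ψ ih1 ih2 =>
      simp [PropForm.heval, Heyting.Regular.coe_inf, ih1, ih2,
        compl_compl_inf_distrib]
      rw [← ih1, ← ih2]; rfl
  | or φ ψ ih1 ih2 =>
      rw [PropForm.heval, PropForm.heval, Heyting.Regular.coe_sup, ih1, ih2]
      rw [show ((φ.heval v)ᶜᶜ ⊔ (ψ.heval v)ᶜᶜ)ᶜ = (φ.heval v ⊔ ψ.heval v)ᶜ by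
        simp [compl_sup, compl_compl_compl]]

/-- **Semantic Glivenko theorem**: a formula `φ` is valid in all Boolean algebras
if and only if `¬¬φ` is valid in all Heyting algebras. -/
theorem semantic_glivenko (φ : PropForm) :
    (∀ (B : Type) [BooleanAlgebra B], ∀ v : ℕ → B, φ.heval v = ⊤) ↔
    (∀ (H : Type) [HeytingAlgebra H], ∀ v : ℕ → H, (φ.neg.neg).heval v = ⊤) := by
  constructor
  · intro h H _ v
    have := h (Heyting.Regular H) (fun n => Heyting.Regular.toRegular (v n))
    have hc := congrArg (Heyting.Regular.val) this
    rw [heval_regular] at hc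
    simpa [PropForm.heval] using hc
  · intro h B _ v
    have := h B v
    simp only [PropForm.heval, compl_compl] at this
    exact this
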